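/- Let f : M₁ → M₂ be a surjective graded R-module homomorphism and I a graded classical S-primary submodule of M₂. Then f⁻¹(I) is a graded classical S-primary submodule of M₁. -/

import Mathlib

variable {G : Type*} [AddCommGroup G] [DecidableEq G]
variable {R : Type*} [CommRing R] (𝒜 : G → AddSubmonoid R) [GradedRing 𝒜]
variable {M : Type*} [AddCommGroup M] [Module R M]
variable (ℳ : G → AddSubmonoid M) [SetLike.GradedSMul 𝒜 ℳ] [DirectSum.Decomposition ℳ]

/-- `P` is a graded submodule of the graded module `M`. -/
def IsGradedSubmodule (P : Submodule R M) : Prop :=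
  ∀ m ∈ P, ∀ g : G, (DirectSum.decompose ℳ m g : M) ∈ P

/-- `P` is a graded classical primary submodule of `M`. -/
def IsGrClPrimary (P : Submodule R M) : Prop :=
  IsGradedSubmodule ℳ P ∧ P ≠ ⊤ ∧
    ∀ x y : R, ∀ m : M, SetLike.IsHomogeneousElem 𝒜 x → SetLike.IsHomogeneousElem 𝒜 y →
      SetLike.IsHomogeneousElem ℳ m → (x * y) • m ∈ P →
        x • m ∈ P ∨ ∃ n : ℕ, 0 < n ∧ y ^ n • m ∈ P

/-- `P` is a graded classical `S`-primary submodule of `M`;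
this includes the requirement `(P :_R M) ∩ S = ∅`. -/
def IsGrClSPrimary (S : Submonoid R) (P : Submodule R M) : Prop :=
  IsGradedSubmodule ℳ P ∧ Disjoint ((P.colon ⊤ : Ideal R) : Set R) (S : Set R) ∧
    ∃ s ∈ S, ∀ x y : R, ∀ m : M, SetLike.IsHomogeneousElem 𝒜 x → SetLike.IsHomogeneousElem 𝒜 y →
      SetLike.IsHomogeneousElem ℳ m → (x * y) • m ∈ P →
        (s * x) • m ∈ P ∨ ∃ n : ℕ, 0 < n ∧ (s * y ^ n) • m ∈ P

theorem map_directSumDecompose_of_map_mem {ι M N σ τ F : Type*} [DecidableEq ι]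
    [AddCommMonoid M] [AddCommMonoid N] [SetLike σ M] [AddSubmonoidClass σ M]
    [SetLike τ N] [AddSubmonoidClass τ N] {ℳ : ι → σ} {𝒩 : ι → τ}
    [DirectSum.Decomposition ℳ] [DirectSum.Decomposition 𝒩]
    [FunLike F M N] [AddMonoidHomClass F M N] {f : F} (hf : ∀ i, ∀ m ∈ ℳ i, f m ∈ 𝒩 i)
    (m : M) (i : ι) :
    f (DirectSum.decompose ℳ m i) = DirectSum.decompose 𝒩 (f m) i := by
  induction m using DirectSum.Decomposition.inductionOn ℳ with
  | zero => simp
  | @homogeneous j x =>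
    by_cases h : j = i
    · subst h
      rw [DirectSum.decompose_of_mem_same ℳ x.2, DirectSum.decompose_of_mem_same 𝒩 (hf j x x.2)]
    · rw [DirectSum.decompose_of_mem_ne ℳ x.2 h, DirectSum.decompose_of_mem_ne 𝒩 (hf j x x.2) h,
        map_zero]
  | add x y hx hy =>
    simp only [map_add, DirectSum.decompose_add, DirectSum.add_apply, AddMemClass.coe_add, hx, hy]

theorem SetLike.IsHomogeneousElem.map {ι M N σ τ F : Type*} [SetLike σ M] [SetLike τ N]
    {ℳ : ι → σ} {𝒩 : ι → τ} [FunLike F M N] {f : F} (hf : ∀ i, ∀ m ∈ ℳ i, f m ∈ 𝒩 i) {m : M}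
    (hm : SetLike.IsHomogeneousElem ℳ m) : SetLike.IsHomogeneousElem 𝒩 (f m) :=
  let ⟨i, hi⟩ := hm
  ⟨i, hf i m hi⟩

theorem Submodule.colon_comap_of_surjective {R M N : Type*} [Semiring R]
    [AddCommMonoid M] [AddCommMonoid N] [Module R M] [Module R N] {f : M →ₗ[R] N}
    (hf : Function.Surjective f) (P : Submodule R N) :
    (P.comap f).colon Set.univ = P.colon Set.univ := by
  ext r
  simp only [Submodule.mem_colon, Set.mem_univ, true_imp_iff, Submodule.mem_comap, map_smul]
  exact (hf.forall (p := fun n => r • n ∈ P)).symm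

theorem IsGradedSubmodule.comap {ι A N N₂ : Type*} [DecidableEq ι] [CommRing A]
    [AddCommGroup N] [Module A N] [AddCommGroup N₂] [Module A N₂]
    {𝒩 : ι → AddSubmonoid N} {𝒩₂ : ι → AddSubmonoid N₂}
    [DirectSum.Decomposition 𝒩] [DirectSum.Decomposition 𝒩₂] {P : Submodule A N₂}
    (hP : IsGradedSubmodule 𝒩₂ P) {f : N →ₗ[A] N₂} (hf : ∀ i, ∀ m ∈ 𝒩 i, f m ∈ 𝒩₂ i) :
    IsGradedSubmodule 𝒩 (P.comap f) := fun m hm i => by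
  rw [Submodule.mem_comap, map_directSumDecompose_of_map_mem hf]
  exact hP _ hm i

theorem comap_isGrClSPrimary {M₂ : Type*} [AddCommGroup M₂] [Module R M₂]
    (ℳ₂ : G → AddSubmonoid M₂) [DirectSum.Decomposition ℳ₂]
    (S : Submonoid R)
    (f : M →ₗ[R] M₂) (hf : Function.Surjective f)
    (hgr : ∀ g : G, ∀ m ∈ ℳ g, f m ∈ ℳ₂ g)
    (I : Submodule R M₂) (hI : IsGrClSPrimary 𝒜 ℳ₂ S I) :
    IsGrClSPrimary 𝒜 ℳ S (I.comap f) := by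
  obtain ⟨hIgr, hIdisj, s, hsS, hs⟩ := hI
  refine ⟨hIgr.comap hgr, ?_, s, hsS, fun x y m hx hy hm hxym => ?_⟩
  · rwa [Set.top_eq_univ, Submodule.colon_comap_of_surjective hf]
  · simp only [Submodule.mem_comap, map_smul] at hxym ⊢
    exact hs x y (f m) hx hy (hm.map hgr) hxym
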